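/- Let Z be a CAT(1) space and ξ, η ∈ Z with η almost near ξ (meaning |ξ,η| + |η,ξ̂| = π for every antipode ξ̂ of ξ). Then no geodesic from ξ to η branches at an interior point, i.e. any two geodesics from ξ to η that agree on an initial segment of positive length coincide. -/
import Mathlib


open Real Set Filter

noncomputable section

/-- `γ` restricted to `[a,b]` is a unit-speed geodesic. -/
def IsGeodesicOn {Z : Type*} [MetricSpace Z] (γ : ℝ → Z) (a b : ℝ) : Prop :=
  ∀ s ∈ Set.Icc a b, ∀ t ∈ Set.Icc a b, dist (γ s) (γ t) = |s - t|

/-- A geodesic from `x` to `y` parametrized by arclength on `[0, dist x y]`. -/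
def GeodesicBetween {Z : Type*} [MetricSpace Z] (γ : ℝ → Z) (x y : Z) : Prop :=
  γ 0 = x ∧ γ (dist x y) = y ∧ IsGeodesicOn γ 0 (dist x y)

/-- The comparison distance in the unit sphere `S²`: in a spherical comparison triangle
with side lengths `a = |x y|`, `b = |x z|`, `c = |y z|`, the distance from the vertex
`z̄` to the point at distance `s` from `x̄` on the side `x̄ ȳ`
(spherical law of cosines). -/
noncomputable def sphCompDist (a b c s : ℝ) : ℝ :=
  Real.arccos (Real.cos b * Real.cos s +
    Real.sin b * Real.sin s *
      ((Real.cos c - Real.cos a * Real.cos b) / (Real.sin a * Real.sin b)))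

/-- A CAT(1) space: a complete metric space in which points at distance `< π` are joined
by geodesics and in which triangles of perimeter `< 2π` are no thicker than their
comparison triangles in the unit sphere `S²`. -/
class IsCATOne (Z : Type*) [MetricSpace Z] : Prop where
  complete : CompleteSpace Z
  geodesics : ∀ x y : Z, dist x y < π → ∃ γ : ℝ → Z, GeodesicBetween γ x y
  comparison : ∀ x y z : Z, dist x y + dist y z + dist z x < 2 * π →
    ∀ γ : ℝ → Z, GeodesicBetween γ x y →
      ∀ s ∈ Set.Icc (0 : ℝ) (dist x y),
        dist z (γ s) ≤ sphCompDist (dist x y) (dist x z) (dist y z) s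

/-- The (Alexandrov) angle between two unit-speed geodesics emanating from a common
point equals `θ`: the comparison angles converge to `θ`. -/
def AngleAt {Z : Type*} [MetricSpace Z] (γ₁ γ₂ : ℝ → Z) (θ : ℝ) : Prop :=
  Filter.Tendsto (fun t : ℝ => 2 * Real.arcsin (dist (γ₁ t) (γ₂ t) / (2 * t)))
    (nhdsWithin 0 (Set.Ioi 0)) (nhds θ)

/-- π-convexity: a subset containing every geodesic between its points at distance `< π`. -/
def PiConvex {Z : Type*} [MetricSpace Z] (C : Set Z) : Prop :=
  ∀ p ∈ C, ∀ q ∈ C, dist p q < π → ∀ γ : ℝ → Z, GeodesicBetween γ p q →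
    ∀ t ∈ Set.Icc (0 : ℝ) (dist p q), γ t ∈ C


/-- A point `η` is *almost near* `ξ` in a CAT(1) space if `|ξ,η| + |η,ξ̂| = π` for every
antipode `ξ̂` of `ξ` (a point at distance `≥ π` from `ξ`). -/
def AlmostNear {Z : Type*} [MetricSpace Z] (ξ η : Z) : Prop :=
  ∀ ξhat : Z, π ≤ dist ξ ξhat → dist ξ η + dist η ξhat = π

lemma sphCompDist_degenerate {d t : ℝ} (h0 : 0 < t) (htd : t < d) (hd : d < π) :
    sphCompDist d t (d - t) t = 0 := by
  have hsd : Real.sin d ≠ 0 := ne_of_gt (Real.sin_pos_of_pos_of_lt_pi (h0.trans htd) hd)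
  have hst : Real.sin t ≠ 0 := ne_of_gt (Real.sin_pos_of_pos_of_lt_pi h0 (htd.trans hd))
  unfold sphCompDist
  rw [Real.cos_sub]
  have harg : Real.cos t * Real.cos t +
      Real.sin t * Real.sin t *
        ((Real.cos d * Real.cos t + Real.sin d * Real.sin t - Real.cos d * Real.cos t) /
          (Real.sin d * Real.sin t)) = 1 := by
    have h1 : (Real.cos d * Real.cos t + Real.sin d * Real.sin t - Real.cos d * Real.cos t) /
        (Real.sin d * Real.sin t) = 1 := by
      rw [show Real.cos d * Real.cos t + Real.sin d * Real.sin t - Real.cos d * Real.cos t =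
        Real.sin d * Real.sin t by ring]
      exact div_self (mul_ne_zero hsd hst)
    rw [h1, mul_one]
    rw [show Real.cos t * Real.cos t + Real.sin t * Real.sin t =
      Real.sin t ^ 2 + Real.cos t ^ 2 by ring]
    exact Real.sin_sq_add_cos_sq t
  rw [harg, Real.arccos_one]

lemma geodesic_unique_lt_pi {Z : Type*} [MetricSpace Z] [IsCATOne Z]
    (x y : Z) (hd : dist x y < π)
    (γ₁ γ₂ : ℝ → Z) (h₁ : GeodesicBetween γ₁ x y) (h₂ : GeodesicBetween γ₂ x y) :
    ∀ t ∈ Set.Icc (0 : ℝ) (dist x y), γ₁ t = γ₂ t := by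
  obtain ⟨h₁0, h₁d, h₁g⟩ := h₁
  obtain ⟨h₂0, h₂d, h₂g⟩ := h₂
  rintro t ⟨ht0, htd⟩
  rcases eq_or_lt_of_le ht0 with h0 | h0
  · rw [← h0, h₁0, h₂0]
  rcases eq_or_lt_of_le htd with hD | hD
  · rw [hD, h₁d, h₂d]
  have hdnn : (0:ℝ) ≤ dist x y := dist_nonneg
  have hzx : dist x (γ₂ t) = t := by
    have := h₂g 0 ⟨le_refl 0, hdnn⟩ t ⟨ht0, htd⟩
    rw [h₂0] at this
    rw [this, abs_of_nonpos (by linarith)]; ring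
  have hzy : dist y (γ₂ t) = dist x y - t := by
    have := h₂g (dist x y) ⟨hdnn, le_refl _⟩ t ⟨ht0, htd⟩
    rw [h₂d] at this
    rw [this, abs_of_nonneg (by linarith)]
  have hperim : dist x y + dist y (γ₂ t) + dist (γ₂ t) x < 2 * π := by
    rw [hzy, dist_comm (γ₂ t) x, hzx]; linarith
  have hcomp := IsCATOne.comparison x y (γ₂ t) hperim γ₁ ⟨h₁0, h₁d, h₁g⟩ t ⟨ht0, htd⟩
  rw [hzx, hzy, sphCompDist_degenerate h0 hD hd] at hcomp
  have : dist (γ₂ t) (γ₁ t) = 0 := le_antisymm hcomp dist_nonneg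
  exact (dist_eq_zero.mp this).symm

/-- If `η` is almost near `ξ` in a CAT(1) space, then no geodesic from `ξ` to `η`
branches at an interior point: any two geodesics from `ξ` to `η` agreeing on an initial
segment of positive length coincide. -/
theorem no_branching_for_almost_near {Z : Type*} [MetricSpace Z] [IsCATOne Z]
    (ξ η : Z) (h : AlmostNear ξ η)
    (γ₁ γ₂ : ℝ → Z) (h₁ : GeodesicBetween γ₁ ξ η) (h₂ : GeodesicBetween γ₂ ξ η)
    (hinit : ∃ ε > 0, ∀ t ∈ Set.Icc (0 : ℝ) ε, γ₁ t = γ₂ t) :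
    ∀ t ∈ Set.Icc (0 : ℝ) (dist ξ η), γ₁ t = γ₂ t := by
  by_cases hd : dist ξ η < π
  · exact geodesic_unique_lt_pi ξ η hd γ₁ γ₂ h₁ h₂
  · push_neg at hd
    have hdπ : dist ξ η = π := by
      have := h η hd; simpa using this
    obtain ⟨ε, hε, hagree⟩ := hinit
    set ε₀ := min ε (π / 2) with hε₀def
    have hε₀pos : 0 < ε₀ := lt_min hε (by positivity)
    have hε₀lt : ε₀ < π := lt_of_le_of_lt (min_le_right _ _) (by linarith [Real.pi_pos])
    obtain ⟨h₁0, h₁d, h₁g⟩ := h₁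
    obtain ⟨h₂0, h₂d, h₂g⟩ := h₂
    have hmemε₀ : ε₀ ∈ Set.Icc (0:ℝ) (dist ξ η) := ⟨hε₀pos.le, by rw [hdπ]; exact hε₀lt.le⟩
    have hp : γ₂ ε₀ = γ₁ ε₀ := (hagree ε₀ ⟨hε₀pos.le, min_le_left _ _⟩).symm
    have hpη : dist (γ₁ ε₀) η = π - ε₀ := by
      have := h₁g ε₀ hmemε₀ (dist ξ η) ⟨dist_nonneg, le_refl _⟩
      rw [h₁d, hdπ] at this
      rw [this, abs_of_nonpos (by linarith)]; ring
    have hmem : ∀ s ∈ Set.Icc (0:ℝ) (π - ε₀), ε₀ + s ∈ Set.Icc (0:ℝ) (dist ξ η) := by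
      rintro s ⟨hs0, hs1⟩
      exact ⟨by linarith, by rw [hdπ]; linarith⟩
    have hg₁ : GeodesicBetween (fun s => γ₁ (ε₀ + s)) (γ₁ ε₀) η := by
      refine ⟨by simp, ?_, ?_⟩
      · rw [hpη]; show γ₁ (ε₀ + (π - ε₀)) = η
        rw [show ε₀ + (π - ε₀) = π by ring, ← hdπ, h₁d]
      · rw [hpη]
        intro s hs t ht
        have := h₁g (ε₀ + s) (hmem s hs) (ε₀ + t) (hmem t ht)
        rw [this]; congr 1; ring
    have hg₂ : GeodesicBetween (fun s => γ₂ (ε₀ + s)) (γ₁ ε₀) η := by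
      refine ⟨by simpa using hp, ?_, ?_⟩
      · rw [hpη]; show γ₂ (ε₀ + (π - ε₀)) = η
        rw [show ε₀ + (π - ε₀) = π by ring, ← hdπ, h₂d]
      · rw [hpη]
        intro s hs t ht
        have := h₂g (ε₀ + s) (hmem s hs) (ε₀ + t) (hmem t ht)
        rw [this]; congr 1; ring
    have key := geodesic_unique_lt_pi (γ₁ ε₀) η (by rw [hpη]; linarith) _ _ hg₁ hg₂
    rintro t ⟨ht0, htd⟩
    rcases le_or_gt t ε₀ with hle | hlt
    · exact hagree t ⟨ht0, hle.trans (min_le_left _ _)⟩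
    · have := key (t - ε₀) (by rw [hpη]; constructor <;> [linarith; (rw [hdπ] at htd; linarith)])
      simpa [show ε₀ + (t - ε₀) = t by ring] using this

end
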